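/- Assume g satisfies conditions (A1)–(A3) on (a,b), let F be the distribution function with density p(y) = c₁ e^{−G(y)} on (a,b), and for z ∈ (a,b) let f_z be the Stein solution defined by f_z(w) = F(w)(1 − F(z))/p(w) for w ≤ z and f_z(w) = F(z)(1 − F(w))/p(w) for w > z. Then 0 ≤ f_z(w) ≤ 1/c₁ for all w ∈ (a,b). -/

import Mathlib

/-!
Write `G(y) = ∫_{w₀}^y g`, so that `p = c₁ e^{-G}`. Since `g` is nondecreasing, translating a
segment of integration towards `w₀` can only increase `∫ g` over it; for `y ≤ w ≤ w₀` this gives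
`G(w) + G(y + (w₀ - w)) ≤ G(y)`, i.e. `p(y) ≤ e^{-G(w)} p(y + (w₀ - w))`. Integrating over `y ≤ w`
and using `∫ p = 1` yields `F(w) ≤ e^{-G(w)} = p(w)/c₁`, and symmetrically `1 - F(w) ≤ p(w)/c₁`
for `w ≥ w₀`. As `F` is nondecreasing with values in `[0, 1]`, the numerator of `f_z(w)` is at
most `min (F w) (1 - F w)`, whence `0 ≤ f_z(w) ≤ 1/c₁`.
-/

open MeasureTheory Filter Set

/-- The open interval `(a, b) ⊆ ℝ` determined by extended-real endpoints. -/
def strip (a b : EReal) : Set ℝ := {x : ℝ | a < (x : EReal) ∧ (x : EReal) < b}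

/-- The density `p(y) = c₁ e^{-G(y)}`, `G(y) = ∫_{w₀}^y g`. -/
noncomputable def steinPdf (g : ℝ → ℝ) (w₀ c₁ : ℝ) (y : ℝ) : ℝ :=
  c₁ * Real.exp (-(∫ t in w₀..y, g t))

/-- The distribution function `F` with density `p` on `(a, b)`. -/
noncomputable def steinCDF (g : ℝ → ℝ) (a b : EReal) (w₀ c₁ : ℝ) (w : ℝ) : ℝ :=
  ∫ y in strip a b ∩ Set.Iic w, steinPdf g w₀ c₁ y

/-- The Stein solution `f_z`: `f_z(w) = F(w)(1-F(z))/p(w)` for `w ≤ z`, and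
`f_z(w) = F(z)(1-F(w))/p(w)` for `w > z`. -/
noncomputable def steinSol (g : ℝ → ℝ) (a b : EReal) (w₀ c₁ : ℝ) (z w : ℝ) : ℝ :=
  if w ≤ z then steinCDF g a b w₀ c₁ w * (1 - steinCDF g a b w₀ c₁ z) / steinPdf g w₀ c₁ w
  else steinCDF g a b w₀ c₁ z * (1 - steinCDF g a b w₀ c₁ w) / steinPdf g w₀ c₁ w

open intervalIntegral

instance (a b : EReal) : (strip a b).OrdConnected :=
  ⟨fun _ hx _ hy _ ht =>
    ⟨hx.1.trans_le (EReal.coe_le_coe_iff.2 ht.1), (EReal.coe_le_coe_iff.2 ht.2).trans_lt hy.2⟩⟩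

lemma measurableSet_strip (a b : EReal) : MeasurableSet (strip a b) :=
  measurable_coe_real_ereal measurableSet_Ioo

lemma mul_le_min_of_le_one {x y : ℝ} (hx₀ : 0 ≤ x) (hx₁ : x ≤ 1) (hy₀ : 0 ≤ y) (hy₁ : y ≤ 1) :
    x * y ≤ min x y :=
  le_min (mul_le_of_le_one_right hx₀ hy₁) (mul_le_of_le_one_left hy₀ hx₁)

lemma setIntegral_le_mul_setIntegral_of_le_comp_add {G : Type*} [MeasurableSpace G] [AddGroup G]
    [MeasurableAdd G] {μ : Measure G} [μ.IsAddRightInvariant] {f : G → ℝ} {S T : Set G}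
    (hf : IntegrableOn f S μ) (hf₀ : 0 ≤ᵐ[μ.restrict S] f) (hT : MeasurableSet T)
    (hTS : T ⊆ S) {c : G} (hmaps : MapsTo (· + c) T S) {K : ℝ} (hK : 0 ≤ K)
    (hle : ∀ x ∈ T, f x ≤ K * f (x + c)) :
    ∫ x in T, f x ∂μ ≤ K * ∫ x in S, f x ∂μ := by
  have emb : MeasurableEmbedding (· + c : G → G) := measurableEmbedding_addRight c
  have hpres := measurePreserving_add_right μ c
  have hshift : IntegrableOn (fun x => f (x + c)) T μ :=
    ((hpres.restrict_image_emb emb T).integrable_comp_emb emb).2 (hf.mono_set hmaps.image_subset)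
  calc ∫ x in T, f x ∂μ ≤ ∫ x in T, K * f (x + c) ∂μ :=
        setIntegral_mono_on (hf.mono_set hTS) (hshift.const_mul K) hT hle
    _ = K * ∫ x in (· + c) '' T, f x ∂μ := by
        rw [MeasureTheory.integral_const_mul, hpres.setIntegral_image_emb emb]
    _ ≤ K * ∫ x in S, f x ∂μ :=
        mul_le_mul_of_nonneg_left (setIntegral_mono_set hf hf₀ hmaps.image_subset.eventuallyLE) hK

section Monotone

variable {g : ℝ → ℝ} {s : Set ℝ} [s.OrdConnected]

lemma MonotoneOn.intervalIntegrable_of_mem (hg : MonotoneOn g s) {x y : ℝ} (hx : x ∈ s)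
    (hy : y ∈ s) : IntervalIntegrable g volume x y :=
  (hg.mono (Set.OrdConnected.uIcc_subset ‹_› hx hy)).intervalIntegrable

lemma MonotoneOn.integral_le_integral_add (hg : MonotoneOn g s) {x y c : ℝ} (hxy : x ≤ y)
    (hc : 0 ≤ c) (hx : x ∈ s) (hyc : y + c ∈ s) :
    ∫ t in x..y, g t ≤ ∫ t in (x + c)..(y + c), g t := by
  have mem : ∀ t, x ≤ t → t ≤ y + c → t ∈ s := fun t h₁ h₂ =>
    Set.OrdConnected.out ‹_› hx hyc ⟨h₁, h₂⟩
  have hshift : MonotoneOn (fun t => g (t + c)) (uIcc x y) := fun u hu v hv huv => by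
    rw [uIcc_of_le hxy] at hu hv
    exact hg (mem _ (by linarith [hu.1]) (by linarith [hu.2]))
      (mem _ (by linarith [hv.1]) (by linarith [hv.2])) (by linarith)
  rw [← integral_comp_add_right]
  exact integral_mono_on hxy (hg.intervalIntegrable_of_mem hx (mem y hxy (by linarith)))
    hshift.intervalIntegrable fun t ht =>
      hg (mem t ht.1 (by linarith [ht.2])) (mem _ (by linarith [ht.1]) (by linarith [ht.2]))
        (by linarith)

lemma MonotoneOn.integral_add_integral_translate_le (hg : MonotoneOn g s) {w₀ y w : ℝ}
    (hw₀ : w₀ ∈ s) (hy : y ∈ s) (hw : w ∈ s) (hyw : y ≤ w ∧ w ≤ w₀ ∨ w₀ ≤ w ∧ w ≤ y) :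
    (∫ t in w₀..w, g t) + ∫ t in w₀..(y + (w₀ - w)), g t ≤ ∫ t in w₀..y, g t := by
  have hsplit : (∫ t in w₀..y, g t) - ∫ t in w₀..w, g t = ∫ t in w..y, g t :=
    integral_interval_sub_left (hg.intervalIntegrable_of_mem hw₀ hy)
      (hg.intervalIntegrable_of_mem hw₀ hw)
  rcases hyw with ⟨hyw, hww₀⟩ | ⟨hw₀w, hwy⟩
  · have hshift := hg.integral_le_integral_add hyw (sub_nonneg.2 hww₀) hy
      (by rwa [add_sub_cancel])
    rw [add_sub_cancel] at hshift
    have h₁ : ∫ t in w₀..(y + (w₀ - w)), g t = -∫ t in (y + (w₀ - w))..w₀, g t := integral_symm _ _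
    have h₂ : ∫ t in w..y, g t = -∫ t in y..w, g t := integral_symm _ _
    linarith
  · have hshift := hg.integral_le_integral_add (x := w₀) (y := y + (w₀ - w)) (c := w - w₀)
      (by linarith) (by linarith) hw₀ (by rwa [add_assoc, sub_add_sub_cancel, sub_self, add_zero])
    rw [add_sub_cancel, add_assoc, sub_add_sub_cancel, sub_self, add_zero] at hshift
    linarith

end Monotone

section Stein

variable {g : ℝ → ℝ} {a b : EReal} {w₀ c₁ : ℝ}

lemma steinPdf_nonneg (hc₁ : 0 ≤ c₁) (y : ℝ) : 0 ≤ steinPdf g w₀ c₁ y :=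
  mul_nonneg hc₁ (Real.exp_pos _).le

lemma integrableOn_steinPdf (hnorm : ∫ y in strip a b, steinPdf g w₀ c₁ y = 1) :
    IntegrableOn (steinPdf g w₀ c₁) (strip a b) :=
  Integrable.of_integral_ne_zero (hnorm ▸ one_ne_zero)

lemma steinPdf_le_mul_steinPdf_translate (hc₁ : 0 ≤ c₁) (hg : MonotoneOn g (strip a b))
    (hw₀ : w₀ ∈ strip a b) {y w : ℝ} (hy : y ∈ strip a b) (hw : w ∈ strip a b)
    (hyw : y ≤ w ∧ w ≤ w₀ ∨ w₀ ≤ w ∧ w ≤ y) :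
    steinPdf g w₀ c₁ y ≤ Real.exp (-∫ t in w₀..w, g t) * steinPdf g w₀ c₁ (y + (w₀ - w)) := by
  have key := hg.integral_add_integral_translate_le hw₀ hy hw hyw
  rw [steinPdf, steinPdf, mul_left_comm, ← Real.exp_add]
  gcongr
  linarith

lemma steinCDF_nonneg (hc₁ : 0 ≤ c₁) (w : ℝ) : 0 ≤ steinCDF g a b w₀ c₁ w :=
  setIntegral_nonneg ((measurableSet_strip a b).inter measurableSet_Iic)
    fun y _ => steinPdf_nonneg hc₁ y

lemma steinCDF_le_one (hc₁ : 0 ≤ c₁) (hnorm : ∫ y in strip a b, steinPdf g w₀ c₁ y = 1)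
    (w : ℝ) : steinCDF g a b w₀ c₁ w ≤ 1 :=
  hnorm ▸ setIntegral_mono_set (integrableOn_steinPdf hnorm)
    (Eventually.of_forall (steinPdf_nonneg hc₁)) inter_subset_left.eventuallyLE

lemma steinCDF_mono (hc₁ : 0 ≤ c₁) (hnorm : ∫ y in strip a b, steinPdf g w₀ c₁ y = 1) :
    Monotone (steinCDF g a b w₀ c₁) := fun _ _ huv =>
  setIntegral_mono_set ((integrableOn_steinPdf hnorm).mono_set inter_subset_left)
    (Eventually.of_forall (steinPdf_nonneg hc₁))
    (inter_subset_inter_right _ (Iic_subset_Iic.2 huv)).eventuallyLE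

lemma one_sub_steinCDF (hnorm : ∫ y in strip a b, steinPdf g w₀ c₁ y = 1) (w : ℝ) :
    1 - steinCDF g a b w₀ c₁ w = ∫ y in strip a b \ Iic w, steinPdf g w₀ c₁ y := by
  rw [← hnorm, steinCDF,
    ← integral_inter_add_sdiff measurableSet_Iic (integrableOn_steinPdf hnorm), add_sub_cancel_left]

lemma steinCDF_le_exp (hc₁ : 0 ≤ c₁) (hnorm : ∫ y in strip a b, steinPdf g w₀ c₁ y = 1)
    (hg : MonotoneOn g (strip a b)) (hw₀ : w₀ ∈ strip a b) {w : ℝ} (hw : w ∈ strip a b)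
    (hww₀ : w ≤ w₀) : steinCDF g a b w₀ c₁ w ≤ Real.exp (-∫ t in w₀..w, g t) := by
  have hbound := setIntegral_le_mul_setIntegral_of_le_comp_add (integrableOn_steinPdf hnorm)
    (Eventually.of_forall (steinPdf_nonneg hc₁))
    ((measurableSet_strip a b).inter measurableSet_Iic) inter_subset_left (c := w₀ - w)
    (fun y ⟨hy, hyw⟩ => Set.OrdConnected.out inferInstance hy hw₀
      ⟨by linarith, by linarith [show y ≤ w from hyw]⟩)
    (Real.exp_pos _).le
    (fun y ⟨hy, hyw⟩ => steinPdf_le_mul_steinPdf_translate hc₁ hg hw₀ hy hw (.inl ⟨hyw, hww₀⟩))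
  rwa [hnorm, mul_one] at hbound

lemma one_sub_steinCDF_le_exp (hc₁ : 0 ≤ c₁) (hnorm : ∫ y in strip a b, steinPdf g w₀ c₁ y = 1)
    (hg : MonotoneOn g (strip a b)) (hw₀ : w₀ ∈ strip a b) {w : ℝ} (hw : w ∈ strip a b)
    (hw₀w : w₀ ≤ w) : 1 - steinCDF g a b w₀ c₁ w ≤ Real.exp (-∫ t in w₀..w, g t) := by
  have hbound := setIntegral_le_mul_setIntegral_of_le_comp_add (integrableOn_steinPdf hnorm)
    (Eventually.of_forall (steinPdf_nonneg hc₁))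
    ((measurableSet_strip a b).diff measurableSet_Iic) sdiff_subset (c := w₀ - w)
    (fun y ⟨hy, hyw⟩ => Set.OrdConnected.out inferInstance hw₀ hy
      ⟨by linarith [notMem_Iic.1 hyw], by linarith⟩)
    (Real.exp_pos _).le
    (fun y ⟨hy, hyw⟩ =>
      steinPdf_le_mul_steinPdf_translate hc₁ hg hw₀ hy hw (.inr ⟨hw₀w, (notMem_Iic.1 hyw).le⟩))
  rwa [hnorm, mul_one, ← one_sub_steinCDF hnorm] at hbound

lemma min_steinCDF_le_exp (hc₁ : 0 ≤ c₁) (hnorm : ∫ y in strip a b, steinPdf g w₀ c₁ y = 1)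
    (hg : MonotoneOn g (strip a b)) (hw₀ : w₀ ∈ strip a b) {w : ℝ} (hw : w ∈ strip a b) :
    min (steinCDF g a b w₀ c₁ w) (1 - steinCDF g a b w₀ c₁ w) ≤ Real.exp (-∫ t in w₀..w, g t) := by
  rcases le_total w w₀ with hww₀ | hw₀w
  · exact (min_le_left _ _).trans (steinCDF_le_exp hc₁ hnorm hg hw₀ hw hww₀)
  · exact (min_le_right _ _).trans (one_sub_steinCDF_le_exp hc₁ hnorm hg hw₀ hw hw₀w)

lemma steinSol_nonneg (hc₁ : 0 ≤ c₁) (hnorm : ∫ y in strip a b, steinPdf g w₀ c₁ y = 1)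
    (z w : ℝ) : 0 ≤ steinSol g a b w₀ c₁ z w := by
  have hF₀ := steinCDF_nonneg (g := g) (a := a) (b := b) (w₀ := w₀) hc₁
  have hF₁ := steinCDF_le_one hc₁ hnorm
  unfold steinSol
  split_ifs
  all_goals exact div_nonneg (mul_nonneg (hF₀ _) (sub_nonneg.2 (hF₁ _))) (steinPdf_nonneg hc₁ w)

lemma steinSol_le_min_div (hc₁ : 0 ≤ c₁) (hnorm : ∫ y in strip a b, steinPdf g w₀ c₁ y = 1)
    (z w : ℝ) : steinSol g a b w₀ c₁ z w ≤
      min (steinCDF g a b w₀ c₁ w) (1 - steinCDF g a b w₀ c₁ w) / steinPdf g w₀ c₁ w := by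
  set F := steinCDF g a b w₀ c₁
  have hF₀ : ∀ v, 0 ≤ F v := steinCDF_nonneg hc₁
  have hF₁ : ∀ v, F v ≤ 1 := steinCDF_le_one hc₁ hnorm
  have hFmono : Monotone F := steinCDF_mono hc₁ hnorm
  have hp := steinPdf_nonneg (g := g) (w₀ := w₀) hc₁ w
  unfold steinSol
  split_ifs with hwz
  · refine div_le_div_of_nonneg_right ?_ hp
    calc F w * (1 - F z) ≤ min (F w) (1 - F z) :=
          mul_le_min_of_le_one (hF₀ w) (hF₁ w) (by linarith [hF₁ z]) (by linarith [hF₀ z])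
      _ ≤ min (F w) (1 - F w) := by gcongr; exact hFmono hwz
  · refine div_le_div_of_nonneg_right ?_ hp
    calc F z * (1 - F w) ≤ min (F z) (1 - F w) :=
          mul_le_min_of_le_one (hF₀ z) (hF₁ z) (by linarith [hF₁ w]) (by linarith [hF₀ w])
      _ ≤ min (F w) (1 - F w) := by gcongr; exact hFmono (not_le.1 hwz).le

end Stein

theorem steinSol_nonneg_le_general
    (a b : EReal) (g : ℝ → ℝ) (w₀ c₁ : ℝ)
    (hw₀ : w₀ ∈ strip a b) (hc₁ : 0 < c₁)
    (hnorm : ∫ y in strip a b, steinPdf g w₀ c₁ y = 1)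
    -- condition (A1)
    (hg_mono : MonotoneOn g (strip a b))
    (z : ℝ) :
    ∀ w ∈ strip a b, 0 ≤ steinSol g a b w₀ c₁ z w ∧ steinSol g a b w₀ c₁ z w ≤ 1 / c₁ := by
  intro w hw
  refine ⟨steinSol_nonneg hc₁.le hnorm z w, ?_⟩
  have hpdf : steinPdf g w₀ c₁ w = c₁ * Real.exp (-∫ t in w₀..w, g t) := rfl
  calc steinSol g a b w₀ c₁ z w
      ≤ min (steinCDF g a b w₀ c₁ w) (1 - steinCDF g a b w₀ c₁ w) / steinPdf g w₀ c₁ w :=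
        steinSol_le_min_div hc₁.le hnorm z w
    _ ≤ Real.exp (-∫ t in w₀..w, g t) / steinPdf g w₀ c₁ w := by
        gcongr
        · exact steinPdf_nonneg hc₁.le w
        · exact min_steinCDF_le_exp hc₁.le hnorm hg_mono hw₀ hw
    _ = 1 / c₁ := by
        rw [hpdf]
        field_simp

/-- Lemma 4.1, (4.3): `0 ≤ f_z(w) ≤ 1/c₁` for all `w ∈ (a,b)`. -/
theorem steinSol_nonneg_le
    (a b : EReal) (hab : a < b) (g : ℝ → ℝ) (w₀ c₁ : ℝ)
    (hw₀ : w₀ ∈ strip a b) (hc₁ : 0 < c₁)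
    (hnorm : ∫ y in strip a b, steinPdf g w₀ c₁ y = 1)
    -- condition (A1)
    (hg_mono : MonotoneOn g (strip a b))
    (hg_sign : ∀ w ∈ strip a b, 0 ≤ (w - w₀) * g w)
    -- condition (A2)
    (hg_diff : ∀ w ∈ strip a b, DifferentiableAt ℝ g w)
    (hg'_diff : ∀ w ∈ strip a b, DifferentiableAt ℝ (deriv g) w)
    (hg'_cont : ContinuousOn (deriv g) (strip a b))
    (hg_ineq : ∀ w ∈ strip a b, 0 ≤ 2 * (deriv g w) ^ 2 - g w * deriv (deriv g) w)
    -- condition (A3)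
    (hlim_a : Tendsto (fun y => g y * steinPdf g w₀ c₁ y)
      (Filter.comap (fun x : ℝ => (x : EReal)) (nhdsWithin a (Set.Ioi a))) (nhds 0))
    (hlim_b : Tendsto (fun y => g y * steinPdf g w₀ c₁ y)
      (Filter.comap (fun x : ℝ => (x : EReal)) (nhdsWithin b (Set.Iio b))) (nhds 0))
    (z : ℝ) (hz : z ∈ strip a b) :
    ∀ w ∈ strip a b, 0 ≤ steinSol g a b w₀ c₁ z w ∧ steinSol g a b w₀ c₁ z w ≤ 1 / c₁ :=
  steinSol_nonneg_le_general a b g w₀ c₁ hw₀ hc₁ hnorm hg_mono z
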